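/- arXiv:2412.09797 — 2 statements merged into one kernel-verified Lean document; each statement's English description precedes it below -/
import Mathlib

section
/- Let n ≥ 1 and let w be a positive word in the generators σ_1, …, σ_{2n} of the braid group B_{2n+1} which begins with σ_1 and contains no other occurrence of σ_1. Then there exists a positive word w' with the same length as w and representing the same element of B_{2n+1}, such that at least one of the following holds: (1) w' is the word σ_1 σ_2 ⋯ σ_i for some i ≤ 2n; or (2) w' contains two consecutive equal letters σ_i σ_i for some i with 1 < i ≤ 2n; or (3) w' contains exactly one occurrence of σ_1 and does not begin with σ_1. -/
/-- Defining relations for the braid group `B_m`.  Generators are indexed by `ℕ`,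
with index `i` corresponding to the standard generator `σ_i` for `1 ≤ i ≤ m - 1`;
the out-of-range generators (index `0` or index `> m - 1`) are killed, so that the
presented group is (isomorphic to) the braid group `B_m` with its standard
presentation: `σ_i σ_j = σ_j σ_i` for `|i - j| ≥ 2` and
`σ_i σ_{i+1} σ_i = σ_{i+1} σ_i σ_{i+1}` for `1 ≤ i ≤ m - 2`. -/
def braidRels (m : ℕ) : Set (FreeGroup ℕ) :=
  {r | (∃ i j : ℕ, 1 ≤ i ∧ i + 2 ≤ j ∧ j ≤ m - 1 ∧
          r = FreeGroup.of i * FreeGroup.of j * (FreeGroup.of i)⁻¹ * (FreeGroup.of j)⁻¹) ∨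
       (∃ i : ℕ, 1 ≤ i ∧ i + 1 ≤ m - 1 ∧
          r = FreeGroup.of i * FreeGroup.of (i + 1) * FreeGroup.of i *
              (FreeGroup.of (i + 1) * FreeGroup.of i * FreeGroup.of (i + 1))⁻¹) ∨
       (∃ i : ℕ, (i = 0 ∨ m - 1 < i) ∧ r = FreeGroup.of i)}

/-- The braid group `B_m`. -/
abbrev BraidGroup (m : ℕ) := PresentedGroup (braidRels m)

/-- The standard generator `σ_i` of the braid group `B_m` (nontrivial for `1 ≤ i ≤ m - 1`). -/
def braidσ (m i : ℕ) : BraidGroup m := PresentedGroup.of i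

/-- The element of `B_m` represented by a positive word, encoded as the list of the
indices of its letters. -/
def braidWordProd (m : ℕ) (w : List ℕ) : BraidGroup m := (w.map (braidσ m)).prod

lemma braid_rel_holds {m : ℕ} {r : FreeGroup ℕ} (h : r ∈ braidRels m) :
    PresentedGroup.mk (braidRels m) r = 1 := by
  have : r ∈ Subgroup.normalClosure (braidRels m) := Subgroup.subset_normalClosure h
  exact (QuotientGroup.eq_one_iff r).mpr this

lemma braid_comm {m : ℕ} {i j : ℕ} (hi : 1 ≤ i) (hij : i + 2 ≤ j) (hj : j ≤ m - 1) :
    braidσ m i * braidσ m j = braidσ m j * braidσ m i := by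
  have h := braid_rel_holds (m := m)
    (r := FreeGroup.of i * FreeGroup.of j * (FreeGroup.of i)⁻¹ * (FreeGroup.of j)⁻¹)
    (Or.inl ⟨i, j, hi, hij, hj, rfl⟩)
  simp only [map_mul, map_inv] at h
  open scoped commutatorElement in
  have h' : ⁅(PresentedGroup.mk (braidRels m)) (FreeGroup.of i),
      (PresentedGroup.mk (braidRels m)) (FreeGroup.of j)⁆ = 1 := h
  exact commutatorElement_eq_one_iff_mul_comm.mp h'

lemma braid_braid {m : ℕ} {i : ℕ} (hi : 1 ≤ i) (hm : i + 1 ≤ m - 1) :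
    braidσ m i * braidσ m (i+1) * braidσ m i = braidσ m (i+1) * braidσ m i * braidσ m (i+1) := by
  have h := braid_rel_holds (m := m)
    (r := FreeGroup.of i * FreeGroup.of (i+1) * FreeGroup.of i *
        (FreeGroup.of (i+1) * FreeGroup.of i * FreeGroup.of (i+1))⁻¹)
    (Or.inr (Or.inl ⟨i, hi, hm, rfl⟩))
  simp only [map_mul, map_inv] at h
  exact mul_inv_eq_one.mp h

lemma braidWordProd_cons (m : ℕ) (x : ℕ) (l : List ℕ) :
    braidWordProd m (x :: l) = braidσ m x * braidWordProd m l := by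
  simp [braidWordProd]

lemma braidWordProd_append (m : ℕ) (a b : List ℕ) :
    braidWordProd m (a ++ b) = braidWordProd m a * braidWordProd m b := by
  simp [braidWordProd]

lemma delta_succ (m k : ℕ) :
    braidWordProd m (List.range' 1 (k+1)) = braidWordProd m (List.range' 1 k) * braidσ m (k+1) := by
  rw [List.range'_concat, braidWordProd_append]
  simp [braidWordProd, Nat.add_comm]

lemma delta_comm {m k j : ℕ} (hkj : k + 2 ≤ j) (hj : j ≤ m - 1) :
    braidσ m j * braidWordProd m (List.range' 1 k)
      = braidWordProd m (List.range' 1 k) * braidσ m j := by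
  induction k with
  | zero => simp [braidWordProd]
  | succ k ih =>
    rw [delta_succ, ← mul_assoc, ih (by omega), mul_assoc,
      ← braid_comm (i := k+1) (by omega) (by omega) hj, mul_assoc]

lemma delta_sigma {m k j : ℕ} (hj : 1 ≤ j) (hjk : j + 1 ≤ k) (hk : k ≤ m - 1) :
    braidWordProd m (List.range' 1 k) * braidσ m j
      = braidσ m (j+1) * braidWordProd m (List.range' 1 k) := by
  induction k with
  | zero => omega
  | succ k ih =>
    rcases Nat.lt_or_ge (j+1) (k+1) with h | h
    · -- j + 1 ≤ k
      rw [delta_succ, mul_assoc, ← braid_comm (i := j) (j := k+1) hj (by omega) hk,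
        ← mul_assoc, ih (by omega) (by omega), mul_assoc]
    · -- k = j, i.e. k+1 = j+1
      have hkj : k = j := by omega
      subst hkj
      obtain ⟨p, rfl⟩ : ∃ p, k = p + 1 := ⟨k - 1, by omega⟩
      have hb : braidσ m (p+1) * (braidσ m (p+1+1) * braidσ m (p+1))
          = braidσ m (p+1+1) * (braidσ m (p+1) * braidσ m (p+1+1)) := by
        rw [← mul_assoc, braid_braid (by omega) (by omega), mul_assoc]
      rw [delta_succ, delta_succ]
      simp only [mul_assoc]
      rw [hb, ← mul_assoc, ← delta_comm (by omega) (by omega)]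
      simp only [mul_assoc]

lemma braid_aux (n : ℕ) (hn : 1 ≤ n) (rest : List ℕ) :
    ∀ (k : ℕ), 1 ≤ k → k ≤ 2 * n →
      (∀ i ∈ rest, 2 ≤ i ∧ i ≤ 2 * n) →
      ∃ w' : List ℕ, (∀ i ∈ w', 1 ≤ i ∧ i ≤ 2 * n) ∧
        w'.length = (List.range' 1 k ++ rest).length ∧
        braidWordProd (2*n+1) w' = braidWordProd (2*n+1) (List.range' 1 k ++ rest) ∧
        ((∃ i : ℕ, 1 ≤ i ∧ i ≤ 2 * n ∧ w' = List.range' 1 i) ∨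
         (∃ i : ℕ, 1 < i ∧ i ≤ 2 * n ∧ [i, i] <:+: w') ∨
         (w'.count 1 = 1 ∧ w'.head? ≠ some 1)) := by
  induction rest with
  | nil =>
    intro k hk1 hk2 _
    exact ⟨List.range' 1 k, by simp [List.mem_range'_1]; omega, by simp, by simp,
      Or.inl ⟨k, hk1, hk2, rfl⟩⟩
  | cons j rest' ih =>
    intro k hk1 hk2 hrest
    obtain ⟨hj2, hjn⟩ := hrest j (by simp)
    have hcnt_range : (List.range' 1 k).count 1 = 1 := by
      apply List.count_eq_one_of_mem (List.nodup_range' ..)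
      simp [List.mem_range'_1]; omega
    have hcnt_rest : rest'.count 1 = 0 := by
      refine List.count_eq_zero.mpr fun h => ?_
      have := hrest 1 (by simp [h]); omega
    have hword : ∀ i ∈ List.range' 1 k ++ j :: rest', 1 ≤ i ∧ i ≤ 2 * n := by
      intro i hi
      rcases List.mem_append.mp hi with h | h
      · simp [List.mem_range'_1] at h; omega
      · have := hrest i h; omega
    by_cases hcase : j = k + 1
    · -- extend the prefix
      subst hcase
      have heq : List.range' 1 k ++ (k+1) :: rest' = List.range' 1 (k+1) ++ rest' := by
        rw [List.range'_concat]; simp [Nat.add_comm]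
      obtain ⟨w', h1, h2, h3, h4⟩ := ih (k+1) (by omega) (by omega)
        (fun i hi => hrest i (by simp [hi]))
      refine ⟨w', h1, ?_, ?_, h4⟩
      · rw [heq]; exact h2
      · rw [heq]; exact h3
    · rcases Nat.lt_or_ge j k with hjk | hjk
      · -- 2 ≤ j ≤ k - 1 : use the δ relation
        refine ⟨(j+1) :: (List.range' 1 k ++ rest'), ?_, by simp; omega, ?_, Or.inr (Or.inr ⟨?_, ?_⟩)⟩
        · intro i hi
          rcases List.mem_cons.mp hi with rfl | h
          · omega
          · exact hword i (by rcases List.mem_append.mp h with h | h <;> simp [h])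
        · rw [braidWordProd_cons, braidWordProd_append, ← mul_assoc,
            ← delta_sigma (by omega) (by omega) (by omega),
            braidWordProd_append, braidWordProd_cons, mul_assoc]
        · simp [List.count_cons, hcnt_range, hcnt_rest]; omega
        · simp; omega
      · rcases Nat.lt_or_ge (k+1) j with hjk2 | hjk2
        · -- j ≥ k + 2 : σ_j commutes with the prefix
          refine ⟨j :: (List.range' 1 k ++ rest'), ?_, by simp; omega, ?_, Or.inr (Or.inr ⟨?_, ?_⟩)⟩
          · intro i hi
            rcases List.mem_cons.mp hi with rfl | h
            · omega
            · exact hword i (by rcases List.mem_append.mp h with h | h <;> simp [h])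
          · rw [braidWordProd_cons, braidWordProd_append, ← mul_assoc,
              delta_comm (by omega) (by omega),
              braidWordProd_append, braidWordProd_cons, mul_assoc]
          · simp [List.count_cons, hcnt_range, hcnt_rest]; omega
          · simp; omega
        · -- j = k : a square σ_k σ_k
          have hjk3 : j = k := by omega
          subst hjk3
          refine ⟨List.range' 1 j ++ j :: rest', hword, rfl, rfl,
            Or.inr (Or.inl ⟨j, by omega, hjn, ?_⟩)⟩
          refine ⟨List.range' 1 (j-1), rest', ?_⟩
          obtain ⟨p, rfl⟩ : ∃ p, j = p + 1 := ⟨j - 1, by omega⟩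
          rw [List.range'_concat]
          simp [Nat.add_comm]

/-- If a positive word `w` in the generators `σ_1, …, σ_{2n}` of
`B_{2n+1}` begins with `σ_1` and contains no other occurrence of `σ_1`, then there is a
positive word `w'` of the same length representing the same element such that (1) `w'` is
`σ_1 σ_2 ⋯ σ_i` for some `i ≤ 2n`, or (2) `w'` contains `σ_i σ_i` for some `1 < i ≤ 2n`,
or (3) `w'` contains exactly one `σ_1` but does not begin with `σ_1`. -/
theorem braid_word_normalization_head (n : ℕ) (hn : 1 ≤ n) (w : List ℕ)
    (hw : ∀ i ∈ w, 1 ≤ i ∧ i ≤ 2 * n)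
    (hhead : w.head? = some 1)
    (hcount : w.count 1 = 1) :
    ∃ w' : List ℕ, (∀ i ∈ w', 1 ≤ i ∧ i ≤ 2 * n) ∧
      w'.length = w.length ∧
      braidWordProd (2 * n + 1) w' = braidWordProd (2 * n + 1) w ∧
      ((∃ i : ℕ, 1 ≤ i ∧ i ≤ 2 * n ∧ w' = List.range' 1 i) ∨
       (∃ i : ℕ, 1 < i ∧ i ≤ 2 * n ∧ [i, i] <:+: w') ∨
       (w'.count 1 = 1 ∧ w'.head? ≠ some 1)) := by
  obtain ⟨a, t, rfl⟩ : ∃ a t, w = a :: t := by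
    cases w with
    | nil => simp at hhead
    | cons a t => exact ⟨a, t, rfl⟩
  have ha : a = 1 := by simpa using hhead
  subst ha
  have hcnt : t.count 1 = 0 := by simpa [List.count_cons] using hcount
  have ht : ∀ i ∈ t, 2 ≤ i ∧ i ≤ 2 * n := by
    intro i hi
    have h1 := hw i (by simp [hi])
    have h2 : i ≠ 1 := fun h => by
      subst h
      exact absurd hcnt (by simpa using List.count_pos_iff.mpr hi |>.ne')
    omega
  have heq : List.range' 1 1 ++ t = 1 :: t := by simp
  obtain ⟨w', h1, h2, h3, h4⟩ := braid_aux n hn t 1 le_rfl (by omega) ht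
  rw [heq] at h2 h3
  exact ⟨w', h1, h2, h3, h4⟩
end

section
/- Let n ≥ 1 and let w be a positive word in the generators σ_1, …, σ_{2n} of the braid group B_{2n+1} which ends with σ_1 and contains no other occurrence of σ_1. Then there exists a positive word w' with the same length as w and representing the same element of B_{2n+1}, such that at least one of the following holds: (1) w' is the word σ_i σ_{i−1} ⋯ σ_2 σ_1 for some i ≤ 2n; or (2) w' contains two consecutive equal letters σ_i σ_i for some i with 1 < i ≤ 2n; or (3) w' contains exactly one occurrence of σ_1 and does not end with σ_1. -/
namespace BraidAux

lemma mk_rel_one {m : ℕ} {r : FreeGroup ℕ} (hr : r ∈ braidRels m) :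
    PresentedGroup.mk (braidRels m) r = 1 :=
  (QuotientGroup.eq_one_iff r).mpr (Subgroup.subset_normalClosure hr)

lemma braid_comm {m i j : ℕ} (h1 : 1 ≤ i) (h2 : i + 2 ≤ j) (h3 : j ≤ m - 1) :
    braidσ m i * braidσ m j = braidσ m j * braidσ m i := by
  have h := mk_rel_one (m := m)
    (r := FreeGroup.of i * FreeGroup.of j * (FreeGroup.of i)⁻¹ * (FreeGroup.of j)⁻¹)
    (Or.inl ⟨i, j, h1, h2, h3, rfl⟩)
  simp only [map_mul, map_inv] at h
  rw [← commutatorElement_def] at h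
  exact commutatorElement_eq_one_iff_mul_comm.mp h

lemma braid_rel {m i : ℕ} (h1 : 1 ≤ i) (h2 : i + 1 ≤ m - 1) :
    braidσ m i * braidσ m (i + 1) * braidσ m i =
      braidσ m (i + 1) * braidσ m i * braidσ m (i + 1) := by
  have h := mk_rel_one (m := m)
    (r := FreeGroup.of i * FreeGroup.of (i + 1) * FreeGroup.of i *
          (FreeGroup.of (i + 1) * FreeGroup.of i * FreeGroup.of (i + 1))⁻¹)
    (Or.inr (Or.inl ⟨i, h1, h2, rfl⟩))
  simp only [map_mul, map_inv] at h
  exact mul_inv_eq_one.mp h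

lemma prod_append (m : ℕ) (u v : List ℕ) :
    braidWordProd m (u ++ v) = braidWordProd m u * braidWordProd m v := by
  simp [braidWordProd]

lemma prod_cons (m a : ℕ) (l : List ℕ) :
    braidWordProd m (a :: l) = braidσ m a * braidWordProd m l := by
  simp [braidWordProd]

lemma prod_singleton (m a : ℕ) : braidWordProd m [a] = braidσ m a := by
  simp [braidWordProd]

lemma comm_list {m a : ℕ} (ha1 : 1 ≤ a) (ha2 : a ≤ m - 1) (l : List ℕ)
    (hl : ∀ j ∈ l, 1 ≤ j ∧ j ≤ m - 1 ∧ (j + 2 ≤ a ∨ a + 2 ≤ j)) :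
    braidσ m a * braidWordProd m l = braidWordProd m l * braidσ m a := by
  induction l with
  | nil => simp [braidWordProd]
  | cons b t ih =>
    obtain ⟨hb1, hb2, hb3⟩ := hl b (List.mem_cons_self (a := b) (l := t))
    have hcomm : braidσ m a * braidσ m b = braidσ m b * braidσ m a := by
      rcases hb3 with h | h
      · exact (braid_comm hb1 h ha2).symm
      · exact braid_comm ha1 h hb2
    rw [prod_cons, ← mul_assoc, hcomm, mul_assoc,
      ih (fun j hj => hl j (List.mem_cons_of_mem b hj))]
    exact (mul_assoc _ _ _).symm

lemma P1 {m a k : ℕ} (hk : k + 2 ≤ a) (ha : a ≤ m - 1) :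
    braidσ m a * braidWordProd m (List.range' 1 k).reverse =
      braidWordProd m (List.range' 1 k).reverse * braidσ m a := by
  apply comm_list (by omega) ha
  intro j hj
  rw [List.mem_reverse, List.mem_range'_1] at hj
  omega

private lemma conj_lemma {G : Type*} [Group G] (A B x y : G)
    (cA : x * A = A * x) (hbr : x * y * x = y * x * y) (cB : y * B = B * y) :
    x * (A * (y * (x * B))) = A * (y * (x * B)) * y := by
  calc x * (A * (y * (x * B)))
      = (x * A) * (y * (x * B)) := by group
    _ = (A * x) * (y * (x * B)) := by rw [cA]
    _ = A * ((x * y * x) * B) := by group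
    _ = A * ((y * x * y) * B) := by rw [hbr]
    _ = A * (y * (x * (y * B))) := by group
    _ = A * (y * (x * (B * y))) := by rw [cB]
    _ = A * (y * (x * B)) * y := by group

lemma P2 {m a k : ℕ} (ha2 : 2 ≤ a) (hak : a + 1 ≤ k) (hk : k ≤ m - 1) :
    braidσ m a * braidWordProd m (List.range' 1 k).reverse =
      braidWordProd m (List.range' 1 k).reverse * braidσ m (a + 1) := by
  have h1 := List.range'_append (s := 1) (m := a - 1) (n := 2) (step := 1)
  rw [show 1 + 1 * (a - 1) = a by omega] at h1
  have h2 := List.range'_append (s := 1) (m := 2 + (a - 1)) (n := k - a - 1) (step := 1)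
  rw [show 1 + 1 * (2 + (a - 1)) = a + 2 by omega] at h2
  have h3 : List.range' a 2 = [a, a + 1] := by simp [List.range']
  have hsplit : List.range' 1 k =
      List.range' 1 (a - 1) ++ [a, a + 1] ++ List.range' (a + 2) (k - a - 1) := by
    have h4 : List.range' 1 (a - 1) ++ [a, a + 1] ++ List.range' (a + 2) (k - a - 1) =
        List.range' 1 (k - a - 1 + (2 + (a - 1))) := by rw [← h3, h1, Nat.add_comm (a - 1) 2, h2, Nat.add_comm (2 + (a - 1))]
    rw [h4]
    congr 1
    omega
  have hR : braidWordProd m (List.range' 1 k).reverse =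
      braidWordProd m (List.range' (a + 2) (k - a - 1)).reverse *
        (braidσ m (a + 1) * (braidσ m a *
          braidWordProd m (List.range' 1 (a - 1)).reverse)) := by
    rw [hsplit]
    simp [braidWordProd, mul_assoc]
  rw [hR]
  have hA : ∀ j ∈ (List.range' (a + 2) (k - a - 1)).reverse,
      1 ≤ j ∧ j ≤ m - 1 ∧ (j + 2 ≤ a ∨ a + 2 ≤ j) := by
    intro j hj
    rw [List.mem_reverse, List.mem_range'_1] at hj
    omega
  have hB : ∀ j ∈ (List.range' 1 (a - 1)).reverse,
      1 ≤ j ∧ j ≤ m - 1 ∧ (j + 2 ≤ a + 1 ∨ a + 1 + 2 ≤ j) := by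
    intro j hj
    rw [List.mem_reverse, List.mem_range'_1] at hj
    omega
  exact conj_lemma _ _ _ _
    (comm_list (by omega) (by omega) _ hA)
    (braid_rel (by omega) (by omega))
    (comm_list (by omega) (by omega) _ hB)

lemma count_one_run (k : ℕ) (hk : 1 ≤ k) : ((List.range' 1 k).reverse).count 1 = 1 := by
  rw [List.count_reverse]
  exact List.count_eq_one_of_mem (List.nodup_range' (s := 1) (n := k))
    (List.mem_range'_1.mpr ⟨le_refl 1, by omega⟩)

lemma run_concat (k : ℕ) :
    (List.range' 1 (k + 1)).reverse = (k + 1) :: (List.range' 1 k).reverse := by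
  rw [List.range'_concat, show 1 + 1 * k = k + 1 by omega, List.reverse_append]
  simp

lemma run_cons (k : ℕ) (hk : 1 ≤ k) :
    (List.range' 1 k).reverse = k :: (List.range' 1 (k - 1)).reverse := by
  obtain ⟨j, rfl⟩ : ∃ j, k = j + 1 := ⟨k - 1, by omega⟩
  rw [run_concat]
  simp

lemma main_aux (n : ℕ) : ∀ (v : List ℕ), (∀ i ∈ v, 2 ≤ i ∧ i ≤ 2 * n) →
    ∀ k, 1 ≤ k → k ≤ 2 * n →
    ∃ w' : List ℕ, (∀ i ∈ w', 1 ≤ i ∧ i ≤ 2 * n) ∧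
      w'.length = v.length + k ∧
      braidWordProd (2 * n + 1) w' =
        braidWordProd (2 * n + 1) (v ++ (List.range' 1 k).reverse) ∧
      ((∃ i : ℕ, 1 ≤ i ∧ i ≤ 2 * n ∧ w' = (List.range' 1 i).reverse) ∨
       (∃ i : ℕ, 1 < i ∧ i ≤ 2 * n ∧ [i, i] <:+: w') ∨
       (w'.count 1 = 1 ∧ w'.getLast? ≠ some 1)) := by
  intro v
  induction v using List.reverseRecOn with
  | nil =>
    intro _ k hk1 hk2
    refine ⟨(List.range' 1 k).reverse, ?_, by simp, by simp, Or.inl ⟨k, hk1, hk2, rfl⟩⟩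
    intro i hi
    rw [List.mem_reverse, List.mem_range'_1] at hi
    omega
  | append_singleton v' a ih =>
    intro hv k hk1 hk2
    have ha : 2 ≤ a ∧ a ≤ 2 * n := hv a (by simp)
    have hv' : ∀ i ∈ v', 2 ≤ i ∧ i ≤ 2 * n := fun i hi => hv i (by simp [hi])
    have hcv' : v'.count 1 = 0 := List.count_eq_zero.mpr fun h => by
      have := hv' 1 h; omega
    rcases eq_or_ne a (k + 1) with hak | hak
    · -- extend the run
      obtain ⟨w', h1, h2, h3, h4⟩ := ih hv' (k + 1) (by omega) (by omega)
      refine ⟨w', h1, ?_, ?_, h4⟩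
      · simp only [List.length_append, List.length_cons, List.length_nil] at h2 ⊢
        omega
      · rw [h3, run_concat, hak]
        congr 1
        simp
    rcases eq_or_ne a k with hak2 | hak2
    · -- σ_k σ_k appears
      refine ⟨v' ++ [a] ++ (List.range' 1 k).reverse, ?_, by simp; omega, rfl,
        Or.inr (Or.inl ⟨a, by omega, ha.2, ?_⟩)⟩
      · intro i hi
        simp only [List.mem_append] at hi
        rcases hi with hi | hi
        · rcases hi with hi | hi
          · have := hv' i hi; omega
          · simp at hi; omega
        · rw [List.mem_reverse, List.mem_range'_1] at hi; omega
      · refine ⟨v', (List.range' 1 (k - 1)).reverse, ?_⟩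
        rw [run_cons k hk1, hak2]
        simp
    · -- move a letter to the end
      obtain ⟨b, hbcond⟩ : ∃ b, (k + 2 ≤ a ∧ b = a) ∨ (2 ≤ a ∧ a + 1 ≤ k ∧ b = a + 1) := by
        rcases le_or_gt (k + 2) a with h | h
        · exact ⟨a, Or.inl ⟨h, rfl⟩⟩
        · exact ⟨a + 1, Or.inr ⟨ha.1, by omega, rfl⟩⟩
      have hP : braidσ (2 * n + 1) a * braidWordProd (2 * n + 1) (List.range' 1 k).reverse =
          braidWordProd (2 * n + 1) (List.range' 1 k).reverse * braidσ (2 * n + 1) b := by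
        rcases hbcond with ⟨h, rfl⟩ | ⟨h, h', rfl⟩
        · exact P1 h (by omega)
        · exact P2 h h' (by omega)
      have hb2n : 2 ≤ b ∧ b ≤ 2 * n := by
        rcases hbcond with ⟨h, rfl⟩ | ⟨h, h', rfl⟩ <;> omega
      refine ⟨v' ++ (List.range' 1 k).reverse ++ [b], ?_, ?_, ?_,
        Or.inr (Or.inr ⟨?_, ?_⟩)⟩
      · intro i hi
        simp only [List.mem_append] at hi
        rcases hi with hi | hi
        · rcases hi with hi | hi
          · have := hv' i hi; omega
          · rw [List.mem_reverse, List.mem_range'_1] at hi; omega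
        · simp at hi; omega
      · simp only [List.length_append, List.length_cons, List.length_nil,
          List.length_reverse, List.length_range']
        omega
      · simp only [prod_append, prod_singleton]
        rw [mul_assoc, mul_assoc, hP]
      · rw [List.count_append, List.count_append, hcv', count_one_run k hk1,
          List.count_eq_zero.mpr (show (1 : ℕ) ∉ [b] by simp; omega)]
      · rw [List.getLast?_concat]
        simp only [ne_eq, Option.some.injEq]
        omega

end BraidAux

/-- If a positive word `w` in the generators `σ_1, …, σ_{2n}` of
`B_{2n+1}` ends with `σ_1` and contains no other occurrence of `σ_1`, then there is a
positive word `w'` of the same length representing the same element such that (1) `w'` is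
`σ_i σ_{i-1} ⋯ σ_2 σ_1` for some `i ≤ 2n`, or (2) `w'` contains `σ_i σ_i` for some
`1 < i ≤ 2n`, or (3) `w'` contains exactly one `σ_1` but does not end with `σ_1`. -/
theorem braid_word_normalization_last (n : ℕ) (hn : 1 ≤ n) (w : List ℕ)
    (hw : ∀ i ∈ w, 1 ≤ i ∧ i ≤ 2 * n)
    (hlast : w.getLast? = some 1)
    (hcount : w.count 1 = 1) :
    ∃ w' : List ℕ, (∀ i ∈ w', 1 ≤ i ∧ i ≤ 2 * n) ∧
      w'.length = w.length ∧
      braidWordProd (2 * n + 1) w' = braidWordProd (2 * n + 1) w ∧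
      ((∃ i : ℕ, 1 ≤ i ∧ i ≤ 2 * n ∧ w' = (List.range' 1 i).reverse) ∨
       (∃ i : ℕ, 1 < i ∧ i ≤ 2 * n ∧ [i, i] <:+: w') ∨
       (w'.count 1 = 1 ∧ w'.getLast? ≠ some 1)) := by
  have hne : w ≠ [] := by rintro rfl; simp at hlast
  rw [List.getLast?_eq_getLast (l := w) hne] at hlast
  have hglast : w.getLast hne = 1 := Option.some.inj hlast
  have hw_eq : w = w.dropLast ++ [1] := by
    conv_lhs => rw [← List.dropLast_append_getLast hne]
    rw [hglast]
  have hcv : w.dropLast.count 1 = 0 := by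
    rw [hw_eq, List.count_append] at hcount
    simpa using hcount
  have hv : ∀ i ∈ w.dropLast, 2 ≤ i ∧ i ≤ 2 * n := by
    intro i hi
    have hiw : i ∈ w := by rw [hw_eq]; simp [hi]
    have h1 := hw i hiw
    have h2 : i ≠ 1 := by
      rintro rfl
      rw [List.count_eq_zero] at hcv
      exact hcv hi
    omega
  obtain ⟨w', h1, h2, h3, h4⟩ := BraidAux.main_aux n w.dropLast hv 1 le_rfl (by omega)
  refine ⟨w', h1, ?_, ?_, h4⟩
  · rw [h2]
    conv_rhs => rw [hw_eq]
    simp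
  · rw [h3]
    congr 1
    conv_rhs => rw [hw_eq]
    congr 1
end
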